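/- arXiv:math/0507229 — 4 statements merged into one kernel-verified Lean document; each statement's English description precedes it below -/
import Mathlib

section
/- For a single point mass σ = c² δ_p with c > 0 and p ∈ ℝ, the kernel R_σ(x,y) = c² (e^{p(x+y)} − e^{p|x−y|})/(2p) is a positive semidefinite symmetric kernel on [0,∞) × [0,∞). -/
open MeasureTheory intervalIntegral

/-- The kernel `(e^{p(x+y)} - e^{p|x-y|})/(2p)`, interpreted as `min x y` at `p = 0`. -/
noncomputable def Rker (p x y : ℝ) : ℝ :=
  if p = 0 then min x y
  else (Real.exp (p * (x + y)) - Real.exp (p * |x - y|)) / (2 * p)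

/-- feature map -/
noncomputable def Fk (p x t : ℝ) : ℝ :=
  (Set.Iic x).indicator (fun t => Real.exp (p * (x - t))) t

lemma Fk_mul (p x y t : ℝ) :
    Fk p x t * Fk p y t
      = (Set.Iic (min x y)).indicator (fun t => Real.exp (p * (x + y) - 2 * p * t)) t := by
  unfold Fk
  by_cases hx : t ≤ x <;> by_cases hy : t ≤ y <;>
    simp [Set.indicator_apply, hx, hy, le_min_iff, ← Real.exp_add] <;>
  · ring_nf

lemma Fk_intble (p x y T : ℝ) :
    IntervalIntegrable (fun t => Fk p x t * Fk p y t) volume 0 T := by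
  simp only [Fk_mul]
  constructor <;>
  · apply MeasureTheory.Integrable.indicator _ measurableSet_Iic
    exact (Real.continuous_exp.comp (by continuity)).integrableOn_Ioc

lemma Fk_integral (p x y T : ℝ) (hx : 0 ≤ x) (hy : 0 ≤ y) (hxT : x ≤ T) (hyT : y ≤ T) :
    ∫ t in (0:ℝ)..T, Fk p x t * Fk p y t = Rker p x y := by
  have hm : min x y ∈ Set.Icc (0:ℝ) T := ⟨le_min hx hy, le_trans (min_le_left _ _) hxT⟩
  have habs : x + y - 2 * min x y = |x - y| := by
    rcases le_total x y with h | h <;> simp [min_eq_left, min_eq_right, h, abs_of_nonpos,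
      abs_of_nonneg, sub_nonneg.2 h, sub_nonpos.2 h] <;> ring
  calc ∫ t in (0:ℝ)..T, Fk p x t * Fk p y t
      = ∫ t in (0:ℝ)..T, (Set.Iic (min x y)).indicator
          (fun t => Real.exp (p * (x + y) - 2 * p * t)) t := by
        simp only [Fk_mul]
    _ = ∫ t in (0:ℝ)..(min x y), Real.exp (p * (x + y) - 2 * p * t) := by
        rw [show Set.Iic (min x y) = {t : ℝ | t ≤ min x y} from rfl]
        exact intervalIntegral.integral_indicator hm
    _ = Rker p x y := by
        by_cases hp : p = 0
        · simp [hp, Rker]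
        · have hder : ∀ t ∈ Set.uIcc (0:ℝ) (min x y),
              HasDerivAt (fun t => Real.exp (p * (x + y) - 2 * p * t) / (-(2 * p)))
                (Real.exp (p * (x + y) - 2 * p * t)) t := by
            intro t _
            have h1 : HasDerivAt (fun t : ℝ => p * (x + y) - 2 * p * t) (-(2 * p)) t := by
              simpa using ((hasDerivAt_id t).const_mul (2 * p)).const_sub (p * (x + y))
            have h2 := h1.exp.div_const (-(2 * p))
            refine h2.congr_deriv ?_
            rw [mul_div_assoc, div_self (neg_ne_zero.mpr (mul_ne_zero two_ne_zero hp)), mul_one]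
          have hint : IntervalIntegrable (fun t => Real.exp (p * (x + y) - 2 * p * t))
              volume 0 (min x y) :=
            (Real.continuous_exp.comp (by continuity)).intervalIntegrable _ _
          rw [intervalIntegral.integral_eq_sub_of_hasDerivAt hder hint]
          have : p * (x + y) - 2 * p * min x y = p * |x - y| := by
            rw [← habs]; ring
          rw [this]
          simp only [Rker, hp, if_false, mul_zero, sub_zero]
          field_simp
          ring

set_option maxHeartbeats 1000000 in
/-- For a single point mass `σ = c² δ_p` with `c > 0`, the kernel
`R_σ(x,y) = c² (e^{p(x+y)} - e^{p|x-y|})/(2p)` (interpreted as `c² min(x,y)` at `p = 0`)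
is a symmetric positive semidefinite kernel on `[0,∞) × [0,∞)`. -/
theorem stmt2 (c p : ℝ) (hc : 0 < c) :
    (∀ x y : ℝ, 0 ≤ x → 0 ≤ y → c ^ 2 * Rker p x y = c ^ 2 * Rker p y x) ∧
    ∀ (m : ℕ) (x : Fin m → ℝ) (a : Fin m → ℝ), (∀ i, 0 ≤ x i) →
      0 ≤ ∑ i, ∑ j, a i * a j * (c ^ 2 * Rker p (x i) (x j)) := by
  constructor
  · intro x y _ _
    unfold Rker
    rw [min_comm, add_comm x y, abs_sub_comm]
  · intro m x a hx
    set T : ℝ := ∑ i, x i with hT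
    have hxT : ∀ i, x i ≤ T :=
      fun i => Finset.single_le_sum (fun j _ => hx j) (Finset.mem_univ i)
    have h0T : (0:ℝ) ≤ T := Finset.sum_nonneg fun j _ => hx j
    have key : ∀ i j, Rker p (x i) (x j) = ∫ t in (0:ℝ)..T, Fk p (x i) t * Fk p (x j) t :=
      fun i j => (Fk_integral p (x i) (x j) T (hx i) (hx j) (hxT i) (hxT j)).symm
    have hint : ∀ i j : Fin m,
        IntervalIntegrable (fun t => a i * a j * (Fk p (x i) t * Fk p (x j) t)) volume 0 T :=
      fun i j => (Fk_intble p (x i) (x j) T).const_mul _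
    have hsq : ∀ t : ℝ, (∑ i, a i * Fk p (x i) t) ^ 2
        = ∑ i, ∑ j, a i * a j * (Fk p (x i) t * Fk p (x j) t) := by
      intro t
      rw [sq, Finset.sum_mul_sum]
      apply Finset.sum_congr rfl; intro i _
      apply Finset.sum_congr rfl; intro j _
      ring
    have hrw : c ^ 2 * ∫ t in (0:ℝ)..T, (∑ i, a i * Fk p (x i) t) ^ 2
        = ∑ i, ∑ j, a i * a j * (c ^ 2 * Rker p (x i) (x j)) := by
      simp only [hsq]
      have hsum : ∀ i : Fin m, IntervalIntegrable
          (fun t => ∑ j, a i * a j * (Fk p (x i) t * Fk p (x j) t)) volume 0 T := by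
        intro i
        have := IntervalIntegrable.sum Finset.univ (fun j (_ : j ∈ Finset.univ) => hint i j)
        rwa [show (∑ j : Fin m, fun t => a i * a j * (Fk p (x i) t * Fk p (x j) t))
            = (fun t => ∑ j, a i * a j * (Fk p (x i) t * Fk p (x j) t)) from
          funext fun t => by simp] at this
      rw [intervalIntegral.integral_finset_sum
            (f := fun i t => ∑ j, a i * a j * (Fk p (x i) t * Fk p (x j) t))
            (fun i _ => hsum i),
          Finset.mul_sum]
      refine Finset.sum_congr rfl fun i _ => ?_
      rw [intervalIntegral.integral_finset_sum (fun j _ => hint i j), Finset.mul_sum]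
      refine Finset.sum_congr rfl fun j _ => ?_
      rw [intervalIntegral.integral_const_mul, ← key i j]
      ring
    rw [← hrw]
    have : 0 ≤ ∫ t in (0:ℝ)..T, (∑ i, a i * Fk p (x i) t) ^ 2 :=
      intervalIntegral.integral_nonneg h0T (fun t _ => sq_nonneg _)
    positivity
end

section
/- Let σ be a finite compactly supported measure on ℝ and define R_σ(x,y) = ∫_ℝ (e^{ζ(x+y)} − e^{ζ|x−y|})/(2ζ) dσ(ζ) for x,y ≥ 0 (integrand interpreted as min(x,y) at ζ = 0). If P^σ is a centered Gaussian process with covariance R_σ, then (d/dx) E[X(x)²] = ∫_ℝ e^{2ζx} dσ(ζ). In particular, if P^σ = P^μ for two finite compactly supported measures σ, μ, then σ = μ. -/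
open MeasureTheory
open scoped ENNReal NNReal

lemma aux_abs_exp_sub_one_le (a : ℝ) : |Real.exp a - 1| ≤ |a| * Real.exp |a| := by
  rcases le_or_gt 0 a with h | h
  · rw [abs_of_nonneg h, abs_of_nonneg (by linarith [Real.one_le_exp h])]
    have h1 : -a + 1 ≤ Real.exp (-a) := Real.add_one_le_exp (-a)
    rw [Real.exp_neg] at h1
    have h2 := Real.exp_pos a
    have h3 : (-a + 1) * Real.exp a ≤ 1 := by
      calc (-a+1) * Real.exp a ≤ (Real.exp a)⁻¹ * Real.exp a := by nlinarith
        _ = 1 := inv_mul_cancel₀ (ne_of_gt h2)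
    nlinarith
  · rw [abs_of_neg h, abs_of_nonpos (by linarith [Real.exp_lt_one_iff.mpr h])]
    nlinarith [Real.add_one_le_exp a, Real.one_le_exp (le_of_lt (neg_pos.mpr h)), Real.exp_pos (-a)]

lemma aux_deriv (p : ℝ) (t : ℝ) :
    HasDerivAt (fun t => Rker p t t) (Real.exp (2 * p * t)) t := by
  rcases eq_or_ne p 0 with hp | hp
  · have : (fun t : ℝ => Rker p t t) = fun t => t := by
      funext s; simp [Rker, hp]
    rw [this, hp]
    simp only [mul_zero, zero_mul, Real.exp_zero]
    exact hasDerivAt_id' t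
  · have : (fun t : ℝ => Rker p t t) = fun t => (Real.exp (2 * p * t) - 1) / (2 * p) := by
      funext s; simp only [Rker, hp, if_false, sub_self, abs_zero, mul_zero, Real.exp_zero]
      ring_nf
    rw [this]
    have h1 : HasDerivAt (fun t : ℝ => 2 * p * t) (2 * p) t := by
      simpa using (hasDerivAt_id t).const_mul (2 * p)
    have h2 : HasDerivAt (fun t : ℝ => Real.exp (2 * p * t)) (Real.exp (2 * p * t) * (2 * p)) t :=
      (Real.hasDerivAt_exp (2 * p * t)).comp t h1
    have h3 := (h2.sub_const 1).div_const (2 * p)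
    exact h3.congr_deriv (mul_div_cancel_right₀ _ (mul_ne_zero two_ne_zero hp))

lemma aux_meas (t : ℝ) : Measurable fun ζ : ℝ => Rker ζ t t := by
  unfold Rker
  refine Measurable.ite ?_ measurable_const ?_
  · exact MeasurableSet.of_compl (by simpa using (isOpen_ne (a := (0:ℝ))).measurableSet)
  · exact ((Real.measurable_exp.comp (measurable_id.mul_const _)).sub
      (Real.measurable_exp.comp (measurable_id.mul_const _))).div
      (measurable_id.const_mul 2)

lemma part1 (σ : Measure ℝ) [IsFiniteMeasure σ] (β : ℝ) (hσ : σ (Set.Icc (-β) β)ᶜ = 0)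
    (x : ℝ) :
    HasDerivAt (fun t => ∫ ζ, Rker ζ t t ∂σ) (∫ ζ, Real.exp (2 * ζ * x) ∂σ) x := by
  have hae : ∀ᵐ ζ ∂σ, ζ ∈ Set.Icc (-β) β := by
    rw [ae_iff]
    simpa [Set.compl_def] using hσ
  have habs : ∀ᵐ ζ ∂σ, |ζ| ≤ |β| := by
    filter_upwards [hae] with ζ hζ
    exact (abs_le.mpr ⟨hζ.1, hζ.2⟩).trans (le_abs_self β)
  have key := hasDerivAt_integral_of_dominated_loc_of_deriv_le (μ := σ)
    (F := fun t ζ => Rker ζ t t) (F' := fun t ζ => Real.exp (2 * ζ * t))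
    (x₀ := x) (bound := fun _ => Real.exp (2 * |β| * (|x| + 1)))
    (s := Metric.ball x 1) (Metric.ball_mem_nhds x one_pos)
    (Filter.Eventually.of_forall fun t => (aux_meas t).aestronglyMeasurable)
    ?_ ?_ ?_ (integrable_const _) ?_
  · exact key.2
  · -- Integrable (fun ζ => Rker ζ x x)
    refine Integrable.mono' (integrable_const (|x| * Real.exp (2 * |β| * |x|)))
      (aux_meas x).aestronglyMeasurable ?_
    filter_upwards [habs] with ζ hζ
    unfold Rker
    split_ifs with h
    · have h1 : (1:ℝ) ≤ Real.exp (2 * |β| * |x|) := Real.one_le_exp (by positivity)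
      rw [min_self, Real.norm_eq_abs]
      nlinarith [abs_nonneg x]
    · have h2 : (0:ℝ) < |2 * ζ| := abs_pos.mpr (by simpa using h)
      rw [Real.norm_eq_abs, abs_div, div_le_iff₀ h2]
      have haux := aux_abs_exp_sub_one_le (ζ * (x + x))
      have hle : Real.exp |ζ * (x + x)| ≤ Real.exp (2 * |β| * |x|) := by
        apply Real.exp_le_exp.mpr
        rw [abs_mul]
        nlinarith [abs_nonneg ζ, abs_nonneg x, abs_add_le x x, abs_le.mp (le_refl |x|)]
      calc |Real.exp (ζ * (x + x)) - Real.exp (ζ * |x - x|)|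
          = |Real.exp (ζ * (x + x)) - 1| := by simp
        _ ≤ |ζ * (x + x)| * Real.exp |ζ * (x + x)| := haux
        _ ≤ |x| * Real.exp (2 * |β| * |x|) * |2 * ζ| := by
            have hxx : |x + x| = 2 * |x| := by rw [← two_mul, abs_mul, abs_two]
            rw [abs_mul, hxx] at hle ⊢
            rw [abs_mul, abs_two]
            nlinarith [hle, mul_nonneg (abs_nonneg ζ) (abs_nonneg x),
              Real.exp_pos |ζ * (x + x)|]
  · exact (Real.continuous_exp.comp ((continuous_const.mul continuous_id).mul
      continuous_const)).aestronglyMeasurable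
  · -- bound
    filter_upwards [habs] with ζ hζ
    intro t ht
    have htx : |t| ≤ |x| + 1 := by
      have := mem_ball_iff_norm.mp ht
      rw [Real.norm_eq_abs] at this
      calc |t| = |x + (t - x)| := by ring_nf
        _ ≤ |x| + |t - x| := abs_add_le _ _
        _ ≤ |x| + 1 := by linarith
    rw [Real.norm_eq_abs, abs_of_pos (Real.exp_pos _)]
    apply Real.exp_le_exp.mpr
    calc 2 * ζ * t ≤ |2 * ζ * t| := le_abs_self _
      _ = 2 * (|ζ| * |t|) := by rw [abs_mul, abs_mul]; simp [abs_of_nonneg]; ring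
      _ ≤ 2 * (|β| * (|x| + 1)) := by
          have h0 : (0:ℝ) ≤ |ζ| := abs_nonneg ζ
          nlinarith [abs_nonneg β, abs_nonneg x]
      _ = 2 * |β| * (|x| + 1) := by ring
  · exact Filter.Eventually.of_forall fun ζ t _ => aux_deriv ζ t

lemma aux_cont_integrable {K : Type*} [TopologicalSpace K] [CompactSpace K]
    [MeasurableSpace K] [OpensMeasurableSpace K]
    (ν : Measure K) [IsFiniteMeasure ν] (g : C(K, ℝ)) :
    Integrable (fun x => g x) ν := by
  exact (BoundedContinuousFunction.mkOfCompact g).integrable ν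

lemma aux_cont_integral_continuous {K : Type*} [TopologicalSpace K] [CompactSpace K]
    [MeasurableSpace K] [OpensMeasurableSpace K]
    (ν : Measure K) [IsFiniteMeasure ν] :
    Continuous fun g : C(K, ℝ) => ∫ x, g x ∂ν := by
  apply (LipschitzWith.of_dist_le_mul (K := (ν Set.univ).toReal.toNNReal) ?_).continuous
  intro g h
  rw [dist_eq_norm, dist_eq_norm, ← integral_sub (aux_cont_integrable ν g) (aux_cont_integrable ν h)]
  have h1 : (fun x => g x - h x) = fun x => (BoundedContinuousFunction.mkOfCompact (g - h)) x := by
    funext x; simp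
  rw [h1]
  calc ‖∫ x, (BoundedContinuousFunction.mkOfCompact (g - h)) x ∂ν‖
      ≤ (ν Set.univ).toReal * ‖BoundedContinuousFunction.mkOfCompact (g - h)‖ :=
        (BoundedContinuousFunction.mkOfCompact (g - h)).norm_integral_le_mul_norm ν
    _ = ((ν Set.univ).toReal.toNNReal : ℝ) * ‖g - h‖ := by
        rw [BoundedContinuousFunction.norm_mkOfCompact,
          Real.coe_toNNReal _ ENNReal.toReal_nonneg]

lemma part2 (σ μ : Measure ℝ) [IsFiniteMeasure σ] [IsFiniteMeasure μ]
    (β : ℝ) (hσ : σ (Set.Icc (-β) β)ᶜ = 0) (hμ : μ (Set.Icc (-β) β)ᶜ = 0)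
    (h : ∀ x : ℝ, 0 ≤ x →
      ∫ ζ, Real.exp (2 * ζ * x) ∂σ = ∫ ζ, Real.exp (2 * ζ * x) ∂μ) : σ = μ := by
  set K : Set ℝ := Set.Icc (-β) β with hKdef
  have hK : MeasurableSet K := measurableSet_Icc
  have hemb : MeasurableEmbedding ((↑) : K → ℝ) := MeasurableEmbedding.subtype_coe hK
  have haeσ : ∀ᵐ ζ ∂σ, ζ ∈ K := by rw [ae_iff]; simpa [Set.compl_def] using hσ
  have haeμ : ∀ᵐ ζ ∂μ, ζ ∈ K := by rw [ae_iff]; simpa [Set.compl_def] using hμ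
  have hresσ : σ.restrict K = σ := Measure.restrict_eq_self_of_ae_mem haeσ
  have hresμ : μ.restrict K = μ := Measure.restrict_eq_self_of_ae_mem haeμ
  set σ' : Measure K := σ.comap Subtype.val with hσ'def
  set μ' : Measure K := μ.comap Subtype.val with hμ'def
  have hmapσ : σ'.map Subtype.val = σ := by
    rw [hσ'def, map_comap_subtype_coe hK, hresσ]
  have hmapμ : μ'.map Subtype.val = μ := by
    rw [hμ'def, map_comap_subtype_coe hK, hresμ]
  have hfinσ : IsFiniteMeasure σ' := by
    constructor
    rw [hσ'def, hemb.comap_apply]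
    exact lt_of_le_of_lt (measure_mono (Set.subset_univ _)) (measure_lt_top σ _)
  have hfinμ : IsFiniteMeasure μ' := by
    constructor
    rw [hμ'def, hemb.comap_apply]
    exact lt_of_le_of_lt (measure_mono (Set.subset_univ _)) (measure_lt_top μ _)
  -- moments agree
  have hmom : ∀ n : ℕ, ∫ ζ : K, Real.exp (n * (ζ : ℝ)) ∂σ'
      = ∫ ζ : K, Real.exp (n * (ζ : ℝ)) ∂μ' := by
    intro n
    have hx := h ((n : ℝ) / 2) (by positivity)
    have e1 : ∀ (ν : Measure ℝ) (hres : ν.restrict K = ν),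
        ∫ ζ : K, Real.exp (n * (ζ : ℝ)) ∂(ν.comap Subtype.val)
          = ∫ ζ, Real.exp (2 * ζ * ((n : ℝ) / 2)) ∂ν := by
      intro ν hres
      rw [integral_subtype_comap hK (fun ζ => Real.exp (n * ζ)), hres]
      congr 1
      funext ζ
      ring_nf
    rw [hσ'def, hμ'def, e1 σ hresσ, e1 μ hresμ, hx]
  -- integrals of continuous functions agree
  have hC : ∀ g : C(K, ℝ), ∫ x, g x ∂σ' = ∫ x, g x ∂μ' := by
    set e : C(K, ℝ) := ⟨fun x => Real.exp (x : ℝ),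
      Real.continuous_exp.comp continuous_subtype_val⟩ with hedef
    set A : Subalgebra ℝ C(K, ℝ) := Algebra.adjoin ℝ ({e} : Set C(K, ℝ)) with hAdef
    have hsep : A.SeparatesPoints := by
      intro x y hxy
      refine ⟨e, ⟨e, Algebra.subset_adjoin (Set.mem_singleton e), rfl⟩, ?_⟩
      simp only [hedef, ContinuousMap.coe_mk]
      exact fun hc => hxy (Subtype.coe_injective (Real.exp_injective hc))
    have hdense := ContinuousMap.subalgebra_topologicalClosure_eq_top_of_separatesPoints A hsep
    set S : Set C(K, ℝ) := {g | ∫ x, g x ∂σ' = ∫ x, g x ∂μ'} with hSdef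
    have hclosed : IsClosed S := by
      have : S = (fun g : C(K, ℝ) => (∫ x, g x ∂σ') - ∫ x, g x ∂μ') ⁻¹' {0} := by
        ext g; simp [hSdef, sub_eq_zero]
      rw [this]
      exact IsClosed.preimage ((aux_cont_integral_continuous σ').sub
        (aux_cont_integral_continuous μ')) isClosed_singleton
    have hAS : (A : Set C(K, ℝ)) ⊆ S := by
      intro g hg
      rw [hAdef, SetLike.mem_coe, Algebra.adjoin_singleton_eq_range_aeval] at hg
      obtain ⟨p, rfl⟩ := hg
      have hpt : ∀ x : K, (Polynomial.aeval e p) x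
          = ∑ i ∈ Finset.range (p.natDegree + 1), p.coeff i * Real.exp (i * (x : ℝ)) := by
        intro x
        rw [Polynomial.aeval_continuousMap_apply, Polynomial.eval_eq_sum_range]
        congr 1
        funext i
        rw [Real.exp_nat_mul]
        rfl
      have hint : ∀ (ν : Measure K) [IsFiniteMeasure ν] (i : ℕ),
          Integrable (fun x : K => p.coeff i * Real.exp (i * (x : ℝ))) ν := by
        intro ν _ i
        exact aux_cont_integrable ν ⟨fun x => p.coeff i * Real.exp (i * (x : ℝ)),
          (continuous_const.mul (Real.continuous_exp.comp
            (continuous_const.mul continuous_subtype_val)))⟩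
      show ∫ x, (Polynomial.aeval e p) x ∂σ' = ∫ x, (Polynomial.aeval e p) x ∂μ'
      simp_rw [hpt]
      rw [integral_finset_sum _ (fun i _ => hint σ' i),
        integral_finset_sum _ (fun i _ => hint μ' i)]
      refine Finset.sum_congr rfl fun i _ => ?_
      rw [integral_const_mul, integral_const_mul, hmom i]
    intro g
    have hgA : g ∈ A.topologicalClosure := by rw [hdense]; trivial
    have : g ∈ closure (A : Set C(K, ℝ)) := hgA
    exact closure_minimal hAS hclosed this
  -- conclude σ' = μ'
  have hσμ' : σ' = μ' := by
    apply ext_of_forall_lintegral_eq_of_IsFiniteMeasure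
    intro f
    have fin1 : ∫⁻ x, (f x : ℝ≥0∞) ∂σ' ≠ ⊤ := (f.lintegral_lt_top_of_nnreal σ').ne
    have fin2 : ∫⁻ x, (f x : ℝ≥0∞) ∂μ' ≠ ⊤ := (f.lintegral_lt_top_of_nnreal μ').ne
    have hthis := hC ⟨fun x => (f x : ℝ), NNReal.continuous_coe.comp f.continuous⟩
    simp only [ContinuousMap.coe_mk] at hthis
    rw [← f.toReal_lintegral_coe_eq_integral σ', ← f.toReal_lintegral_coe_eq_integral μ'] at hthis
    exact (ENNReal.toReal_eq_toReal_iff' fin1 fin2).mp hthis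
  rw [← hmapσ, ← hmapμ, hσμ']

/-- For a finite compactly supported measure `σ` on `ℝ`, the diagonal of the covariance
`E[X(x)²] = R_σ(x,x) = ∫ Rker ζ x x dσ(ζ)` has derivative `∫ e^{2ζx} dσ(ζ)` in `x`; and the
two-sided Laplace transform is injective on finite compactly supported measures: if
`∫ e^{2ζx} dσ(ζ) = ∫ e^{2ζx} dμ(ζ)` for all `x ≥ 0` then `σ = μ`. -/
theorem stmt3 (σ μ : Measure ℝ) [IsFiniteMeasure σ] [IsFiniteMeasure μ]
    (β : ℝ) (hσ : σ (Set.Icc (-β) β)ᶜ = 0) (hμ : μ (Set.Icc (-β) β)ᶜ = 0) :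
    (∀ x : ℝ, 0 ≤ x →
      HasDerivAt (fun t => ∫ ζ, Rker ζ t t ∂σ) (∫ ζ, Real.exp (2 * ζ * x) ∂σ) x) ∧
    ((∀ x : ℝ, 0 ≤ x →
        ∫ ζ, Real.exp (2 * ζ * x) ∂σ = ∫ ζ, Real.exp (2 * ζ * x) ∂μ) → σ = μ) :=
  ⟨fun x _ => part1 σ β hσ x, fun h => part2 σ μ β hσ hμ h⟩
end

section
/- For every α > 0, β > 2, T > 0, and continuous function f : [0,T] → ℝ, it holds that sup_{0 ≤ s < t ≤ T} |f(t) − f(s)|^α / |t−s|^{β−2} ≤ 2^{3α+2} (β/(β−2))^α ∫_0^T ∫_0^T |f(t) − f(s)|^α / |t−s|^β dt ds. -/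
open MeasureTheory Set
open scoped ENNReal

namespace GRR


noncomputable def Kf (α β : ℝ) (g : ℝ → ℝ) (x y : ℝ) : ℝ≥0∞ :=
  ENNReal.ofReal (|g x - g y| ^ α / |x - y| ^ β)

lemma measurable_Kf (α β : ℝ) (hα : 0 ≤ α) (hβ : 0 ≤ β) {g : ℝ → ℝ} (hg : Continuous g) :
    Measurable (fun p : ℝ × ℝ => Kf α β g p.1 p.2) := by
  apply Measurable.ennreal_ofReal
  apply Measurable.div
  · exact ((Real.continuous_rpow_const hα).comp
      (((hg.comp continuous_fst).sub (hg.comp continuous_snd)).abs)).measurable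
  · exact ((Real.continuous_rpow_const hβ).comp
      ((continuous_fst.sub continuous_snd).abs)).measurable

lemma measurable_Kf_right (α β : ℝ) (hα : 0 ≤ α) (hβ : 0 ≤ β) {g : ℝ → ℝ} (hg : Continuous g)
    (x : ℝ) : Measurable (Kf α β g x) :=
 by
  have h := (measurable_Kf α β hα hβ hg).comp (measurable_prodMk_left (x := x))
  exact h

lemma exists_good {s δ : ℝ} (hδ : 0 < δ) (h₁ h₂ : ℝ → ℝ≥0∞)
    (m₁ : Measurable h₁) (m₂ : Measurable h₂) {M₁ M₂ : ℝ≥0∞} (hM₁ : M₁ ≠ ⊤) (hM₂ : M₂ ≠ ⊤)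
    (i₁ : ∫⁻ y in Ioo s (s+δ), h₁ y ≤ M₁) (i₂ : ∫⁻ y in Ioo s (s+δ), h₂ y ≤ M₂) :
    ∃ y ∈ Ioo s (s+δ), h₁ y ≤ 2 * M₁ / ENNReal.ofReal δ ∧
      h₂ y ≤ 2 * M₂ / ENNReal.ofReal δ := by
  set S : Set ℝ := Ioo s (s+δ) with hS
  set D : ℝ≥0∞ := ENNReal.ofReal δ with hD
  have hD0 : D ≠ 0 := by simp [hD, hδ, hδ.le]
  have hDt : D ≠ ⊤ := by simp [hD]
  have hvolS : volume S = D := by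
    rw [hS, Real.volume_Ioo]; congr 1; ring
  have key : ∀ (h : ℝ → ℝ≥0∞), Measurable h → ∀ (M : ℝ≥0∞), M ≠ ⊤ →
      (∫⁻ y in S, h y) ≤ M →
      volume ({y | 2 * M / D < h y} ∩ S) < D / 2 := by
    intro h mh M hMt hint
    have hmeas : MeasurableSet {y | 2 * M / D < h y} := by
      exact measurableSet_lt measurable_const mh
    rcases eq_or_ne M 0 with rfl | hM0
    · have h0 : ∀ᵐ y ∂(volume.restrict S), h y = 0 :=
        (lintegral_eq_zero_iff mh).mp (le_antisymm (by simpa using hint) zero_le)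
      have hnull : volume.restrict S {y | ¬ h y = 0} = 0 := ae_iff.mp h0
      have hle : volume ({y | 2 * (0:ℝ≥0∞) / D < h y} ∩ S) = 0 := by
        have hsub : {y | 2 * (0:ℝ≥0∞) / D < h y} ∩ S ⊆ {y | ¬ h y = 0} ∩ S := by
          intro y hy
          refine ⟨?_, hy.2⟩
          have := hy.1
          simp only [mem_setOf_eq, mul_zero, ENNReal.zero_div] at this ⊢
          exact fun hc => by simp [hc] at this
        rw [Measure.restrict_apply' measurableSet_Ioo] at hnull
        exact measure_mono_null hsub hnull
      rw [hle]
      exact ENNReal.half_pos hD0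
    · set a : ℝ≥0∞ := 2 * M / D with ha
      have ha0 : a ≠ 0 := by
        refine (ENNReal.div_pos (mul_ne_zero (by norm_num) hM0) hDt).ne'
      have hat : a ≠ ⊤ := (ENNReal.div_lt_top (ENNReal.mul_ne_top (by norm_num) hMt) hD0).ne
      set bad : Set ℝ := {y | a < h y} ∩ S with hbad
      have hbadm : MeasurableSet bad := hmeas.inter measurableSet_Ioo
      have hbadS : volume bad ≤ D := hvolS ▸ measure_mono inter_subset_right
      rcases eq_or_ne (volume bad) 0 with h0 | hpos
    
      · rw [h0]; exact ENNReal.half_pos hD0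
      · have hstrict : a * volume bad < M := by
          have h1 : (∫⁻ _ in bad, a) < ∫⁻ y in bad, h y := by
            refine setLIntegral_strict_mono hbadm hpos mh ?_ ?_
            · rw [setLIntegral_const]
              exact ENNReal.mul_ne_top hat (lt_of_le_of_lt hbadS hDt.lt_top).ne
            · exact Filter.Eventually.of_forall fun y hy => hy.1
          have h2 : (∫⁻ y in bad, h y) ≤ ∫⁻ y in S, h y :=
            lintegral_mono_set inter_subset_right
          rw [setLIntegral_const] at h1
          exact lt_of_lt_of_le h1 (le_trans h2 hint)
        have hcancel : a * (D / 2) = M := by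
          rw [ha, ← mul_div_assoc, ENNReal.div_mul_cancel hD0 hDt, mul_comm, mul_div_assoc,
            ENNReal.div_self (by norm_num) (by norm_num), mul_one]
        rw [← hcancel] at hstrict
        exact (ENNReal.mul_lt_mul_iff_right ha0 hat).mp hstrict
  have k1 := key h₁ m₁ M₁ hM₁ i₁
  have k2 := key h₂ m₂ M₂ hM₂ i₂
  have hunion : volume (({y | 2 * M₁ / D < h₁ y} ∪ {y | 2 * M₂ / D < h₂ y}) ∩ S) < D := by
    rw [union_inter_distrib_right]
    calc volume _ ≤ volume ({y | 2 * M₁ / D < h₁ y} ∩ S) + volume ({y | 2 * M₂ / D < h₂ y} ∩ S) :=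
          measure_union_le _ _
      _ < D / 2 + D / 2 := ENNReal.add_lt_add k1 k2
      _ = D := ENNReal.add_halves D
  by_contra hcon
  push_neg at hcon
  have hsub : S ⊆ ({y | 2 * M₁ / D < h₁ y} ∪ {y | 2 * M₂ / D < h₂ y}) ∩ S := by
    intro y hy
    refine ⟨?_, hy⟩
    rcases lt_or_ge (2 * M₁ / D) (h₁ y) with h | h
    · exact Or.inl h
    · exact Or.inr (hcon y hy h)
  exact absurd (le_trans hvolS.ge (measure_mono hsub)) (not_le.mpr hunion)



lemma num_aux {x : ℝ} (hx : 0 < x) : x / 2 ≤ (2:ℝ) ^ x - 1 := by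
  have hrw : (2:ℝ) ^ x = Real.exp (x * Real.log 2) := by
    rw [Real.rpow_def_of_pos (by norm_num), mul_comm]
  have hexp : 1 + x * Real.log 2 ≤ (2:ℝ) ^ x := by
    rw [hrw]; linarith [Real.add_one_le_exp (x * Real.log 2)]
  have hlog : (1:ℝ)/2 ≤ Real.log 2 := by
    have := Real.log_two_gt_d9; norm_num at this ⊢; linarith
  nlinarith

lemma num (β : ℝ) (hβ : 2 < β) :
    (2:ℝ) ^ (2/β) * (1 - (2:ℝ) ^ (-((β-2)/β)))⁻¹ ≤ 4 * (β/(β-2)) := by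
  set x := (β-2)/β with hx
  have hβ0 : (0:ℝ) < β := by linarith
  have hx0 : 0 < x := div_pos (by linarith) hβ0
  have hx1 : x < 1 := by rw [hx, div_lt_one hβ0]; linarith
  have haux := num_aux hx0
  have h2xpos : (0:ℝ) < (2:ℝ) ^ x := Real.rpow_pos_of_pos (by norm_num) _
  have hne : (0:ℝ) < (2:ℝ) ^ x - 1 := by linarith
  have h2b : 2/β = 1 - x := by rw [hx]; field_simp; ring
  have e1 : (2:ℝ) ^ (2/β) = 2 / (2:ℝ) ^ x := by
    rw [h2b, Real.rpow_sub (by norm_num), Real.rpow_one]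
  have e2 : (1 - (2:ℝ) ^ (-x)) = ((2:ℝ)^x - 1) / (2:ℝ)^x := by
    rw [Real.rpow_neg (by norm_num)]
    field_simp
  rw [e1, e2, inv_div]
  have lhs_eq : 2 / (2:ℝ)^x * ((2:ℝ)^x / ((2:ℝ)^x - 1)) = 2 / ((2:ℝ)^x - 1) := by
    field_simp
  rw [lhs_eq]
  have h4x : 4 * (β/(β-2)) = 4 / x := by
    rw [hx]
    field_simp
  rw [h4x]
  rw [div_le_div_iff₀ hne hx0]
  nlinarith

lemma reflect_lintegral (s t : ℝ) (h : ℝ → ℝ≥0∞) (mh : Measurable h) :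
    ∫⁻ y in Icc s t, h (s + t - y) = ∫⁻ y in Icc s t, h y := by
  have mp : MeasurePreserving (fun y : ℝ => s + t - y) volume volume :=
    Measure.measurePreserving_sub_left volume (s + t)
  have me : MeasurableEmbedding (fun y : ℝ => s + t - y) :=
    (MeasurableEquiv.subLeft (s + t)).measurableEmbedding
  have hpre : (fun y : ℝ => s + t - y) ⁻¹' (Icc s t) = Icc s t := by
    ext y
    simp only [mem_preimage, mem_Icc]
    constructor <;> intro hy <;> constructor <;> linarith [hy.1, hy.2]
  have := mp.setLIntegral_comp_preimage_emb me h (Icc s t)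
  rw [hpre] at this
  exact this

lemma chain (α β : ℝ) (hα : 0 < α) (hβ : 2 < β) (s t : ℝ) (hst : s < t)
    (g : ℝ → ℝ) (hg : Continuous g) (b : ℝ) (hb : 0 ≤ b)
    (hB : (∫⁻ x in Icc s t, ∫⁻ y in Icc s t, Kf α β g x y) ≤ ENNReal.ofReal b)
    (u₀ : ℝ) (hu₀ : u₀ ∈ Ioc s t)
    (hIu₀ : (∫⁻ y in Icc s t, Kf α β g u₀ y) ≤
      2 * ENNReal.ofReal b / ENNReal.ofReal (t - s)) :
    |g u₀ - g s| ≤ 4 * (β/(β-2)) * (4*b) ^ α⁻¹ * (t-s) ^ ((β-2) * α⁻¹) := by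
  have hβ0 : (0:ℝ) < β := by linarith
  have hα' : α ≠ 0 := hα.ne'
  set d := t - s with hd
  have hd0 : 0 < d := sub_pos.mpr hst
  set c : ℝ := (2:ℝ) ^ (-(α/β)) with hc
  have hc0 : 0 < c := Real.rpow_pos_of_pos (by norm_num) _
  have hc1 : c < 1 := by
    apply Real.rpow_lt_one_of_one_lt_of_neg (by norm_num)
    have : 0 < α/β := div_pos hα hβ0
    linarith
  set I : ℝ → ℝ≥0∞ := fun x => ∫⁻ y in Icc s t, Kf α β g x y with hI
  have mI : Measurable I := (measurable_Kf α β hα.le hβ0.le hg).lintegral_prod_right'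
  set B : ℝ≥0∞ := ENNReal.ofReal b with hBdef
  have hBt : B ≠ ⊤ := ENNReal.ofReal_ne_top
  -- the choice function
  have key' : ∀ x : ℝ, ∃ y : ℝ, (x ∈ Ioc s t → I x ≠ ⊤ →
      y ∈ Ioo s (s + c*(x-s)) ∧ I y ≤ 2 * B / ENNReal.ofReal (c*(x-s)) ∧
        Kf α β g x y ≤ 2 * I x / ENNReal.ofReal (c*(x-s))) := by
    intro x
    by_cases hx : x ∈ Ioc s t ∧ I x ≠ ⊤
    · obtain ⟨hx1, hx2⟩ := hx
      have hxs : 0 < x - s := sub_pos.mpr hx1.1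
      have hδ : 0 < c * (x - s) := mul_pos hc0 hxs
      have hsub : Ioo s (s + c*(x-s)) ⊆ Icc s t := by
        intro y hy
        have h1 : c * (x - s) ≤ x - s := by nlinarith
        exact ⟨hy.1.le, by linarith [hy.2, hx1.2]⟩
      obtain ⟨y, hy, hy1, hy2⟩ := exists_good hδ I (Kf α β g x) mI
        (measurable_Kf_right α β hα.le hβ0.le hg x) hBt hx2
        (le_trans (lintegral_mono_set hsub) hB)
        (lintegral_mono_set hsub)
      exact ⟨y, fun _ _ => ⟨hy, hy1, hy2⟩⟩
    · exact ⟨s, fun h1 h2 => absurd ⟨h1, h2⟩ hx⟩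
  choose F hF using key'
  set u : ℕ → ℝ := fun n => F^[n] u₀ with hu
  have hu0 : u 0 = u₀ := rfl
  have huS : ∀ n, u (n+1) = F (u n) := fun n => Function.iterate_succ_apply' F n u₀
  -- invariant
  have inv : ∀ n, u n ∈ Ioc s t ∧ I (u n) ≤ 2 * B / ENNReal.ofReal (c * (u n - s)) := by
    intro n
    induction n with
    | zero =>
      refine ⟨hu₀, le_trans hIu₀ (ENNReal.div_le_div_left (ENNReal.ofReal_le_ofReal ?_) _)⟩
      have h1 : u 0 - s ≤ d := by rw [hu0]; simp [hd]; linarith [hu₀.2]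
      nlinarith [sub_pos.mpr hu₀.1]
    | succ n ih =>
      have hlpos : 0 < u n - s := sub_pos.mpr ih.1.1
      have hfin : I (u n) ≠ ⊤ := by
        refine ne_top_of_le_ne_top ?_ ih.2
        exact (ENNReal.div_lt_top (ENNReal.mul_ne_top (by norm_num) hBt)
          (by simp [mul_pos hc0 hlpos])).ne
      have h := hF (u n) ih.1 hfin
      rw [← huS n] at h
      obtain ⟨hmem, hIb, _⟩ := h
      have hlt : u (n+1) - s < c * (u n - s) := by
        have := hmem.2; linarith
      have hlpos' : 0 < u (n+1) - s := sub_pos.mpr hmem.1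
      constructor
      · refine ⟨hmem.1, ?_⟩
        have h1 : c * (u n - s) ≤ u n - s := by nlinarith
        linarith [ih.1.2]
      · refine le_trans hIb (ENNReal.div_le_div_left (ENNReal.ofReal_le_ofReal ?_) _)
        nlinarith
  have hlpos : ∀ n, 0 < u n - s := fun n => sub_pos.mpr (inv n).1.1
  have finI : ∀ n, I (u n) ≠ ⊤ := by
    intro n
    refine ne_top_of_le_ne_top ?_ (inv n).2
    exact (ENNReal.div_lt_top (ENNReal.mul_ne_top (by norm_num) hBt)
      (by simp [mul_pos hc0 (hlpos n)])).ne
  have step : ∀ n, u (n+1) ∈ Ioo s (s + c * (u n - s)) ∧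
      Kf α β g (u n) (u (n+1)) ≤ 2 * I (u n) / ENNReal.ofReal (c * (u n - s)) := by
    intro n
    have h := hF (u n) (inv n).1 (finI n)
    rw [← huS n] at h
    exact ⟨h.1, h.2.2⟩
  have hl : ∀ n, u n - s ≤ c ^ n * d := by
    intro n
    induction n with
    | zero => rw [hu0]; simpa [hd] using hu₀.2
    | succ n ih =>
      have h1 : u (n+1) - s < c * (u n - s) := by have := (step n).1.2; linarith
      calc u (n+1) - s ≤ c * (u n - s) := h1.le
        _ ≤ c * (c ^ n * d) := by nlinarith
        _ = c ^ (n+1) * d := by ring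
  -- per-step real bound
  set r : ℝ := c ^ ((β-2) * α⁻¹) with hr
  have hr0 : (0:ℝ) < r := Real.rpow_pos_of_pos hc0 _
  have hr1 : r < 1 := Real.rpow_lt_one hc0.le hc1 (mul_pos (by linarith) (inv_pos.mpr hα))
  set Λ : ℝ := (4*b) ^ α⁻¹ * ((2:ℝ)^(2/β)) * d ^ ((β-2) * α⁻¹) with hΛ
  have hΛ0 : 0 ≤ Λ := by positivity
  have term : ∀ n, |g (u n) - g (u (n+1))| ≤ Λ * r ^ n := by
    intro n
    set e := c * (u n - s) with he
    have he0 : 0 < e := mul_pos hc0 (hlpos n)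
    have k1 : Kf α β g (u n) (u (n+1)) ≤ ENNReal.ofReal (4 * b / (e * e)) := by
      have h1 := (step n).2
      have h2 : 2 * I (u n) / ENNReal.ofReal e ≤
          2 * (2 * B / ENNReal.ofReal e) / ENNReal.ofReal e := by
        gcongr
        exact (inv n).2
      refine le_trans h1 (le_trans h2 (le_of_eq ?_))
      rw [hBdef, show ((2:ℝ≥0∞)) = ENNReal.ofReal 2 from (ENNReal.ofReal_ofNat 2).symm,
        ← ENNReal.ofReal_mul (by norm_num), ← ENNReal.ofReal_div_of_pos he0,
        ← ENNReal.ofReal_mul (by norm_num), ← ENNReal.ofReal_div_of_pos he0]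
      congr 1
      field_simp
      ring
    have k2 : |g (u n) - g (u (n+1))| ^ α / |u n - u (n+1)| ^ β ≤ 4 * b / (e * e) := by
      have := k1
      rw [Kf] at this
      exact (ENNReal.ofReal_le_ofReal_iff
        (div_nonneg (by linarith) (mul_pos he0 he0).le)).mp this
    have hΔ1 : 0 < u n - u (n+1) := by
      have h1 := (step n).1.2
      have h2 : c * (u n - s) < u n - s := by nlinarith [hlpos n]
      linarith
    have hΔ2 : u n - u (n+1) ≤ u n - s := by
      have := (step n).1.1; linarith
    have habs : |u n - u (n+1)| ≤ u n - s := by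
      rw [abs_of_pos hΔ1]; exact hΔ2
    have hpowpos : (0:ℝ) < |u n - u (n+1)| ^ β :=
      Real.rpow_pos_of_pos (abs_pos.mpr (by linarith)) _
    have k3 : |g (u n) - g (u (n+1))| ^ α ≤ 4 * b / (e * e) * (u n - s) ^ β := by
      rw [div_le_iff₀ hpowpos] at k2
      refine le_trans k2 ?_
      have h1 : |u n - u (n+1)| ^ β ≤ (u n - s) ^ β :=
        Real.rpow_le_rpow (abs_nonneg _) habs hβ0.le
      have h2 : 0 ≤ 4 * b / (e * e) := div_nonneg (by linarith) (mul_pos he0 he0).le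
      exact mul_le_mul_of_nonneg_left h1 h2
    set ℓ := u n - s with hℓ
    have k4 : 4 * b / (e * e) * ℓ ^ β = 4 * b * c⁻¹ ^ 2 * ℓ ^ (β - 2) := by
      have h2 : ℓ ^ (β - 2) = ℓ ^ β / ℓ ^ (2:ℕ) := by
        rw [← Real.rpow_natCast ℓ 2, ← Real.rpow_sub (hlpos n)]
        norm_num
        rfl
      have hee : e * e = c^2 * ℓ^2 := by rw [he]; ring
      rw [h2, hee]
      have hℓ0 : ℓ ≠ 0 := (hlpos n).ne'
      field_simp
    have k5 : |g (u n) - g (u (n+1))| ≤ (4 * b * c⁻¹ ^ 2 * ℓ ^ (β - 2)) ^ α⁻¹ := by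
      calc |g (u n) - g (u (n+1))|
          = (|g (u n) - g (u (n+1))| ^ α) ^ α⁻¹ :=
            (Real.rpow_rpow_inv (abs_nonneg _) hα').symm
        _ ≤ _ := Real.rpow_le_rpow (Real.rpow_nonneg (abs_nonneg _) _)
            (k4 ▸ k3) (by positivity)
    refine le_trans k5 ?_
    have k6 : (4 * b * c⁻¹ ^ 2 * ℓ ^ (β - 2)) ^ α⁻¹
        = (4*b) ^ α⁻¹ * (c⁻¹ ^ 2) ^ α⁻¹ * (ℓ ^ (β-2)) ^ α⁻¹ := by
      rw [Real.mul_rpow (by positivity) (Real.rpow_nonneg (hlpos n).le _),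
        Real.mul_rpow (by linarith) (by positivity)]
    have k7 : (c⁻¹ ^ 2) ^ α⁻¹ = (2:ℝ) ^ (2/β) := by
      have h1 : c⁻¹ = (2:ℝ) ^ (α/β) := by
        rw [hc, ← Real.rpow_neg (by norm_num), neg_neg]
      rw [h1, ← Real.rpow_natCast ((2:ℝ)^(α/β)) 2, ← Real.rpow_mul (by positivity),
        ← Real.rpow_mul (by positivity)]
      congr 1
      field_simp
      ring
    have k8 : (ℓ ^ (β-2)) ^ α⁻¹ = ℓ ^ ((β-2) * α⁻¹) := (Real.rpow_mul (hlpos n).le _ _).symm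
    have k9 : ℓ ^ ((β-2) * α⁻¹) ≤ (c ^ n * d) ^ ((β-2) * α⁻¹) :=
      Real.rpow_le_rpow (hlpos n).le (hl n) (mul_pos (by linarith : (0:ℝ) < β - 2) (inv_pos.mpr hα)).le
    have k10 : (c ^ n * d) ^ ((β-2) * α⁻¹) = r ^ n * d ^ ((β-2) * α⁻¹) := by
      rw [Real.mul_rpow (pow_nonneg hc0.le n) hd0.le]
      congr 1
      rw [hr, ← Real.rpow_natCast c n, ← Real.rpow_mul hc0.le, mul_comm (n:ℝ),
        Real.rpow_mul hc0.le, Real.rpow_natCast]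
    rw [k6, k7, k8]
    calc (4*b) ^ α⁻¹ * (2:ℝ)^(2/β) * ℓ ^ ((β-2) * α⁻¹)
        ≤ (4*b) ^ α⁻¹ * (2:ℝ)^(2/β) * ((c ^ n * d) ^ ((β-2) * α⁻¹)) := by
          have : (0:ℝ) ≤ (4*b) ^ α⁻¹ * (2:ℝ)^(2/β) := by positivity
          exact mul_le_mul_of_nonneg_left k9 this
      _ = Λ * r ^ n := by rw [k10, hΛ]; ring
  -- sum the bounds
  have partialB : ∀ N, |g u₀ - g (u N)| ≤ Λ * (1-r)⁻¹ := by
    intro N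
    have h1 : dist (g (u 0)) (g (u N)) ≤
        ∑ i ∈ Finset.range N, dist (g (u i)) (g (u (i+1))) :=
      dist_le_range_sum_dist (fun n => g (u n)) N
    have h2 : ∑ i ∈ Finset.range N, dist (g (u i)) (g (u (i+1))) ≤
        ∑ i ∈ Finset.range N, Λ * r ^ i :=
      Finset.sum_le_sum fun i _ => by simpa [Real.dist_eq] using term i
    have h3 : ∑ i ∈ Finset.range N, Λ * r ^ i ≤ Λ * (1-r)⁻¹ := by
      rw [← Finset.mul_sum]
      refine mul_le_mul_of_nonneg_left ?_ hΛ0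
      calc ∑ i ∈ Finset.range N, r ^ i ≤ ∑' i : ℕ, r ^ i :=
            (summable_geometric_of_lt_one hr0.le hr1).sum_le_tsum _
              (fun i _ => pow_nonneg hr0.le i)
        _ = (1-r)⁻¹ := tsum_geometric_of_lt_one hr0.le hr1
    have h4 : |g u₀ - g (u N)| = dist (g (u 0)) (g (u N)) := by
      rw [hu0, Real.dist_eq]
    rw [h4]
    exact le_trans (le_trans h1 h2) h3
  have hulim : Filter.Tendsto u Filter.atTop (nhds s) := by
    have h0 : Filter.Tendsto (fun n : ℕ => c ^ n * d) Filter.atTop (nhds 0) := by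
      simpa using (tendsto_pow_atTop_nhds_zero_of_lt_one hc0.le hc1).mul_const d
    have h1 : Filter.Tendsto (fun n : ℕ => s + c ^ n * d) Filter.atTop (nhds s) := by
      simpa using h0.const_add s
    refine tendsto_of_tendsto_of_tendsto_of_le_of_le tendsto_const_nhds h1
      (fun n => by linarith [hlpos n]) (fun n => by linarith [hl n])
  have hlim : Filter.Tendsto (fun N => |g u₀ - g (u N)|) Filter.atTop
      (nhds (|g u₀ - g s|)) := by
    have h1 : Filter.Tendsto (fun N => g (u N)) Filter.atTop (nhds (g s)) :=
      (hg.tendsto s).comp hulim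
    exact ((continuous_const.sub continuous_id).abs.tendsto (g s)).comp h1
  have final1 : |g u₀ - g s| ≤ Λ * (1-r)⁻¹ := le_of_tendsto' hlim partialB
  -- numeric conclusion
  have hrval : r = (2:ℝ) ^ (-((β-2)/β)) := by
    rw [hr, hc, ← Real.rpow_mul (by norm_num)]
    congr 1
    field_simp
  have hΛr : Λ * (1-r)⁻¹ =
      (4*b) ^ α⁻¹ * d ^ ((β-2) * α⁻¹) * ((2:ℝ)^(2/β) * (1 - r)⁻¹) := by
    rw [hΛ]; ring
  refine le_trans final1 ?_
  rw [hΛr, hrval]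
  calc (4*b) ^ α⁻¹ * d ^ ((β-2) * α⁻¹) *
        ((2:ℝ)^(2/β) * (1 - (2:ℝ) ^ (-((β-2)/β)))⁻¹)
      ≤ (4*b) ^ α⁻¹ * d ^ ((β-2) * α⁻¹) * (4 * (β/(β-2))) := by
        refine mul_le_mul_of_nonneg_left (num β hβ) (by positivity)
    _ = 4 * (β/(β-2)) * (4*b) ^ α⁻¹ * d ^ ((β-2) * α⁻¹) := by ring

end GRR

open GRR

/-- Garsia–Rodemich–Rumsey type inequality: for `α > 0`, `β > 2`, `T > 0` and a continuous
`f : [0,T] → ℝ`,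
`|f(t) - f(s)|^α / (t-s)^{β-2} ≤ 2^{3α+2} (β/(β-2))^α ∫_0^T ∫_0^T |f(t)-f(s)|^α/|t-s|^β dt ds`
for all `0 ≤ s < t ≤ T` (the double integral may be infinite, so it is taken in `ℝ≥0∞`). -/
theorem stmt4 (α β T : ℝ) (hα : 0 < α) (hβ : 2 < β) (hT : 0 < T)
    (f : ℝ → ℝ) (hf : ContinuousOn f (Set.Icc 0 T)) :
    ∀ s t : ℝ, 0 ≤ s → s < t → t ≤ T →
      ENNReal.ofReal (|f t - f s| ^ α / (t - s) ^ (β - 2)) ≤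
        ENNReal.ofReal ((2 : ℝ) ^ (3 * α + 2) * (β / (β - 2)) ^ α) *
          ∫⁻ t' in Set.Icc (0:ℝ) T, ∫⁻ s' in Set.Icc (0:ℝ) T,
            ENNReal.ofReal (|f t' - f s'| ^ α / |t' - s'| ^ β) := by
  intro s t hs hst htT
  have hβ0 : (0:ℝ) < β := by linarith
  have hα' : α ≠ 0 := hα.ne'
  have hd0 : 0 < t - s := sub_pos.mpr hst
  have hq0 : (0:ℝ) < β / (β - 2) := div_pos hβ0 (by linarith)
  have hC0 : (0:ℝ) < (2 : ℝ) ^ (3 * α + 2) * (β / (β - 2)) ^ α :=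
    mul_pos (Real.rpow_pos_of_pos two_pos _) (Real.rpow_pos_of_pos hq0 _)
  -- continuous extension of f
  set π : ℝ → ℝ := fun x => max 0 (min x T) with hπ
  have hπc : Continuous π := continuous_const.max (continuous_id.min continuous_const)
  have hπmem : ∀ x, π x ∈ Icc 0 T := fun x => ⟨le_max_left _ _,
    max_le hT.le (min_le_right _ _)⟩
  set g : ℝ → ℝ := fun x => f (π x) with hgdef
  have hgc : Continuous g := hf.comp_continuous hπc hπmem
  have hgeq : ∀ x ∈ Icc (0:ℝ) T, g x = f x := by
    intro x hx
    simp only [hgdef, hπ]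
    rw [min_eq_left hx.2, max_eq_right hx.1]
  have hsT : s ∈ Icc (0:ℝ) T := ⟨hs, le_trans hst.le htT⟩
  have htT' : t ∈ Icc (0:ℝ) T := ⟨le_trans hs hst.le, htT⟩
  have hstI : Icc s t ⊆ Icc (0:ℝ) T := Icc_subset_Icc hs htT
  set J := ∫⁻ t' in Set.Icc (0:ℝ) T, ∫⁻ s' in Set.Icc (0:ℝ) T,
      ENNReal.ofReal (|f t' - f s'| ^ α / |t' - s'| ^ β) with hJ
  rcases eq_or_ne J ⊤ with hJt | hJt
  · rw [hJt, ENNReal.mul_top (by simpa using (ENNReal.ofReal_pos.mpr hC0).ne')]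
    exact le_top
  · set B : ℝ≥0∞ := ∫⁻ x in Icc s t, ∫⁻ y in Icc s t, Kf α β g x y with hB
    have hcongr : B = ∫⁻ x in Icc s t, ∫⁻ y in Icc s t, Kf α β f x y := by
      refine setLIntegral_congr_fun measurableSet_Icc (fun x hx => ?_)
      refine setLIntegral_congr_fun measurableSet_Icc (fun y hy => ?_)
      unfold Kf
      rw [hgeq x (hstI hx), hgeq y (hstI hy)]
    have hBle : B ≤ J := by
      rw [hcongr]
      calc (∫⁻ x in Icc s t, ∫⁻ y in Icc s t, Kf α β f x y)
          ≤ ∫⁻ x in Icc s t, ∫⁻ y in Icc (0:ℝ) T, Kf α β f x y :=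
            lintegral_mono fun x => lintegral_mono_set hstI
        _ ≤ ∫⁻ x in Icc (0:ℝ) T, ∫⁻ y in Icc (0:ℝ) T, Kf α β f x y :=
            lintegral_mono_set hstI
        _ = J := rfl
    have hBt : B ≠ ⊤ := ne_top_of_le_ne_top hJt hBle
    set b := B.toReal with hbdef
    have hb0 : (0:ℝ) ≤ b := ENNReal.toReal_nonneg
    have hBb : B = ENNReal.ofReal b := (ENNReal.ofReal_toReal hBt).symm
    set I : ℝ → ℝ≥0∞ := fun x => ∫⁻ y in Icc s t, Kf α β g x y with hI
    have mI : Measurable I := (measurable_Kf α β hα.le hβ0.le hgc).lintegral_prod_right'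
    have hIB : (∫⁻ x in Icc s t, I x) ≤ ENNReal.ofReal b := le_of_eq (hBb ▸ rfl)
    have hIoo : Ioo s (s + (t - s)) = Ioo s t := by rw [show s + (t - s) = t by ring]
    have hIoosub : Ioo s t ⊆ Icc s t := Ioo_subset_Icc_self
    obtain ⟨u₀, hu₀mem, hIu₀, -⟩ := exists_good hd0 I I mI mI
      (M₁ := ENNReal.ofReal b) (M₂ := ENNReal.ofReal b)
      ENNReal.ofReal_ne_top ENNReal.ofReal_ne_top
      (by rw [hIoo]; exact le_trans (lintegral_mono_set hIoosub) hIB)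
      (by rw [hIoo]; exact le_trans (lintegral_mono_set hIoosub) hIB)
    rw [hIoo] at hu₀mem
    -- first chain
    have hchain1 := chain α β hα hβ s t hst g hgc b hb0 (le_of_eq (hBb ▸ rfl)) u₀
      ⟨hu₀mem.1, hu₀mem.2.le⟩ hIu₀
    -- mirror
    set G : ℝ → ℝ := fun x => g (s + t - x) with hGdef
    have hGc : Continuous G := hgc.comp (continuous_const.sub continuous_id)
    have hKrefl : ∀ x y, Kf α β G x y = Kf α β g (s+t-x) (s+t-y) := by
      intro x y
      unfold Kf
      rw [show (s+t-x) - (s+t-y) = y - x by ring, abs_sub_comm y x]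
    have e1 : ∀ x, (∫⁻ y in Icc s t, Kf α β G x y) = I (s+t-x) := by
      intro x
      calc (∫⁻ y in Icc s t, Kf α β G x y)
          = ∫⁻ y in Icc s t, Kf α β g (s+t-x) (s+t-y) :=
            lintegral_congr fun y => hKrefl x y
        _ = I (s+t-x) := reflect_lintegral s t _
            (measurable_Kf_right α β hα.le hβ0.le hgc (s+t-x))
    have hBr : (∫⁻ x in Icc s t, ∫⁻ y in Icc s t, Kf α β G x y) ≤ ENNReal.ofReal b := by
      calc (∫⁻ x in Icc s t, ∫⁻ y in Icc s t, Kf α β G x y)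
          = ∫⁻ x in Icc s t, I (s+t-x) := lintegral_congr e1
        _ = ∫⁻ x in Icc s t, I x := reflect_lintegral s t I mI
        _ ≤ ENNReal.ofReal b := hIB
    have hIG : (∫⁻ y in Icc s t, Kf α β G (s+t-u₀) y) ≤
        2 * ENNReal.ofReal b / ENNReal.ofReal (t - s) := by
      rw [e1 (s+t-u₀), show s+t-(s+t-u₀) = u₀ by ring]
      exact hIu₀
    have hchain2 := chain α β hα hβ s t hst G hGc b hb0 hBr (s+t-u₀)
      ⟨by linarith [hu₀mem.2], by linarith [hu₀mem.1]⟩ hIG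
    have hG1 : G (s+t-u₀) = g u₀ := by
      simp only [hGdef]; rw [show s+t-(s+t-u₀) = u₀ by ring]
    have hG2 : G s = g t := by
      simp only [hGdef]; rw [show s+t-s = t by ring]
    rw [hG1, hG2] at hchain2
    -- combine
    set R : ℝ := 4 * (β/(β-2)) * (4*b) ^ α⁻¹ * (t-s) ^ ((β-2) * α⁻¹) with hR
    have hcomb : |g t - g s| ≤ 2 * R := by
      calc |g t - g s| ≤ |g t - g u₀| + |g u₀ - g s| := abs_sub_le _ _ _
        _ ≤ R + R := add_le_add (by rw [abs_sub_comm]; exact hchain2) hchain1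
        _ = 2 * R := by ring
    -- final computation
    have hpow : |g t - g s| ^ α ≤ (2*R) ^ α :=
      Real.rpow_le_rpow (abs_nonneg _) hcomb hα.le
    have hRR : (2*R) ^ α = (2:ℝ)^(3*α+2) * (β/(β-2)) ^ α * b * (t-s) ^ (β-2) := by
      have h8 : 2*R = 8 * (β/(β-2)) * (4*b) ^ α⁻¹ * (t-s) ^ ((β-2) * α⁻¹) := by
        rw [hR]; ring
      rw [h8]
      rw [Real.mul_rpow (by positivity) (Real.rpow_nonneg hd0.le _),
        Real.mul_rpow (by positivity) (Real.rpow_nonneg (by linarith) _),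
        Real.mul_rpow (by norm_num) hq0.le]
      rw [Real.rpow_inv_rpow (by linarith) hα']
      rw [← Real.rpow_mul hd0.le, show (β-2) * α⁻¹ * α = β - 2 by field_simp]
      have h8a : (8:ℝ) ^ α = (2:ℝ) ^ (3*α) := by
        rw [show (8:ℝ) = (2:ℝ) ^ (3:ℝ) by
          rw [show (3:ℝ) = ((3:ℕ):ℝ) by norm_num, Real.rpow_natCast]; norm_num,
          ← Real.rpow_mul (by norm_num)]
      have h2a : (2:ℝ) ^ (3*α+2) = (2:ℝ) ^ (3*α) * 4 := by
        rw [Real.rpow_add two_pos, show ((2:ℝ) ^ (2:ℝ)) = 4 by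
          rw [show (2:ℝ) = ((2:ℕ):ℝ) from by norm_num, Real.rpow_natCast]; norm_num]
      rw [h8a, h2a]
      ring
    have hgt : g t = f t := hgeq t htT'
    have hgs : g s = f s := hgeq s hsT
    have hfinal : |f t - f s| ^ α ≤ (2:ℝ)^(3*α+2) * (β/(β-2)) ^ α * b * (t-s) ^ (β-2) := by
      rw [← hgt, ← hgs, ← hRR]
      exact hpow
    have hdpow : (0:ℝ) < (t-s) ^ (β-2) := Real.rpow_pos_of_pos hd0 _
    have hdiv : |f t - f s| ^ α / (t-s) ^ (β-2) ≤ (2:ℝ)^(3*α+2) * (β/(β-2)) ^ α * b := by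
      rw [div_le_iff₀ hdpow]
      exact hfinal
    calc ENNReal.ofReal (|f t - f s| ^ α / (t - s) ^ (β - 2))
        ≤ ENNReal.ofReal ((2:ℝ)^(3*α+2) * (β/(β-2)) ^ α * b) :=
          ENNReal.ofReal_le_ofReal hdiv
      _ = ENNReal.ofReal ((2:ℝ)^(3*α+2) * (β/(β-2)) ^ α) * ENNReal.ofReal b :=
          ENNReal.ofReal_mul hC0.le
      _ = ENNReal.ofReal ((2:ℝ)^(3*α+2) * (β/(β-2)) ^ α) * B := by rw [← hBb]
      _ ≤ ENNReal.ofReal ((2:ℝ)^(3*α+2) * (β/(β-2)) ^ α) * J := mul_le_mul_right hBle _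
end

section
/- Let a ≥ 0, T, T_0 > 0 and let g : [0,∞) → ℝ be a piecewise continuous function with g(q) = 0 for q ≥ T_0. Define h(q,z;y) = e^{(y−z)(q−a)} g(q) 1_{[0,y)}(z) for (q,z) ∈ [0,∞)², y ∈ [0,T]. Then for all 0 ≤ s < t ≤ T, ∫∫ |h(q,z;t) − h(q,z;s)|² dq dz ≤ K|t−s| where K = 2 {1 + (T_0+a)² T²} e^{2T(T_0+a)} ∫_0^∞ g(q)² dq. -/
open MeasureTheory

lemma exp_lip_aux {E x y : ℝ} (hx : x ≤ E) (hy : y ≤ E) :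
    |Real.exp x - Real.exp y| ≤ Real.exp E * |x - y| := by
  wlog hxy : y ≤ x generalizing x y
  · rw [abs_sub_comm, abs_sub_comm x y]; exact this hy hx (le_of_not_ge hxy)
  have h1 : Real.exp x * (1 + (y - x)) ≤ Real.exp y := by
    calc Real.exp x * (1 + (y - x)) ≤ Real.exp x * Real.exp (y - x) :=
          mul_le_mul_of_nonneg_left (by linarith [Real.add_one_le_exp (y - x)])
            (Real.exp_pos x).le
      _ = Real.exp y := by rw [← Real.exp_add]; ring_nf
  have h2 : Real.exp x ≤ Real.exp E := Real.exp_le_exp.mpr hx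
  have h3 : Real.exp y ≤ Real.exp x := Real.exp_le_exp.mpr hxy
  rw [abs_of_nonneg (by linarith : (0:ℝ) ≤ Real.exp x - Real.exp y),
    abs_of_nonneg (by linarith : (0:ℝ) ≤ x - y)]
  nlinarith [mul_nonneg (sub_nonneg.mpr h2) (sub_nonneg.mpr hxy), Real.exp_pos x]

set_option maxHeartbeats 1000000 in
/-- For `h(q,z;y) = e^{(y-z)(q-a)} g(q) 1_{[0,y)}(z)` with `g` vanishing beyond `T₀`,
`∫∫ |h(q,z;t) - h(q,z;s)|² dq dz ≤ K|t-s|` where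
`K = 2{1 + (T₀+a)²T²} e^{2T(T₀+a)} ∫_0^∞ g(q)² dq`. -/
theorem stmt10 (a T T₀ : ℝ) (ha : 0 ≤ a) (hT : 0 < T) (hT₀ : 0 < T₀)
    (g : ℝ → ℝ) (hg : Measurable g) (hsupp : ∀ q : ℝ, T₀ ≤ q → g q = 0)
    (hgi : IntegrableOn (fun q => (g q) ^ 2) (Set.Ici (0:ℝ)))
    (h : ℝ → ℝ → ℝ → ℝ)
    (hdef : ∀ q z y, h q z y =
      Real.exp ((y - z) * (q - a)) * g q * Set.indicator (Set.Ico (0:ℝ) y) 1 z) :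
    ∀ s t : ℝ, 0 ≤ s → s < t → t ≤ T →
      (∫ q in Set.Ici (0:ℝ), ∫ z in Set.Ici (0:ℝ), (h q z t - h q z s) ^ 2)
        ≤ (2 * (1 + (T₀ + a) ^ 2 * T ^ 2) * Real.exp (2 * T * (T₀ + a))
            * ∫ q in Set.Ici (0:ℝ), (g q) ^ 2) * (t - s) := by
  intro s t hs hst htT
  set E : ℝ := T * (T₀ + a) with hEdef
  have hTa : 0 ≤ T₀ + a := by linarith
  have hE2 : Real.exp (2 * T * (T₀ + a)) = Real.exp E * Real.exp E := by
    rw [← Real.exp_add, hEdef]; ring_nf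
  -- pointwise bound
  have key : ∀ q, 0 ≤ q → ∀ z, (h q z t - h q z s) ^ 2 ≤
      Real.exp (2 * T * (T₀ + a)) * g q ^ 2 *
        (Set.indicator (Set.Ico s t) 1 z
          + (t - s) ^ 2 * (T₀ + a) ^ 2 * Set.indicator (Set.Ico 0 s) 1 z) := by
    intro q hq z
    by_cases hgq : g q = 0
    · simp [hdef, hgq]
    have hqT : q < T₀ := by
      by_contra h'
      exact hgq (hsupp q (le_of_not_gt h'))
    have hqa : |q - a| ≤ T₀ + a := abs_le.mpr ⟨by linarith, by linarith⟩
    have hprod : ∀ u : ℝ, 0 ≤ u → u ≤ T → u * (q - a) ≤ E := by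
      intro u hu huT
      calc u * (q - a) ≤ u * (T₀ + a) :=
            mul_le_mul_of_nonneg_left (by linarith [(abs_le.mp hqa).2]) hu
        _ ≤ T * (T₀ + a) := mul_le_mul_of_nonneg_right huT hTa
    rw [hdef, hdef]
    by_cases hz0 : z ∈ Set.Ico 0 s
    · have hzt : z ∈ Set.Ico (0:ℝ) t := ⟨hz0.1, lt_trans hz0.2 hst⟩
      have hzst : z ∉ Set.Ico s t := fun h' => absurd hz0.2 (not_lt.mpr h'.1)
      rw [Set.indicator_of_mem hzt, Set.indicator_of_mem hz0,
        Set.indicator_of_notMem hzst]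
      simp only [Pi.one_apply, mul_one]
      have hx : (t - z) * (q - a) ≤ E := hprod _ (by linarith [hz0.2]) (by linarith [hz0.1])
      have hy : (s - z) * (q - a) ≤ E := hprod _ (by linarith [hz0.2]) (by linarith [hz0.1])
      have hlip := exp_lip_aux hx hy
      have hxy : |(t - z) * (q - a) - (s - z) * (q - a)| ≤ (t - s) * (T₀ + a) := by
        have he : (t - z) * (q - a) - (s - z) * (q - a) = (t - s) * (q - a) := by ring
        rw [he, abs_mul, abs_of_nonneg (by linarith : (0:ℝ) ≤ t - s)]
        exact mul_le_mul_of_nonneg_left hqa (by linarith)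
      have hM : |Real.exp ((t - z) * (q - a)) - Real.exp ((s - z) * (q - a))| ≤
          Real.exp E * ((t - s) * (T₀ + a)) :=
        hlip.trans (mul_le_mul_of_nonneg_left hxy (Real.exp_pos E).le)
      have hsq : (Real.exp ((t - z) * (q - a)) - Real.exp ((s - z) * (q - a))) ^ 2 ≤
          (Real.exp E * ((t - s) * (T₀ + a))) ^ 2 := by
        rw [← sq_abs]
        exact pow_le_pow_left₀ (abs_nonneg _) hM 2
      rw [hE2]
      nlinarith [mul_le_mul_of_nonneg_left hsq (sq_nonneg (g q)), sq_nonneg (g q)]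
    · by_cases hz1 : z ∈ Set.Ico s t
      · have hzt : z ∈ Set.Ico (0:ℝ) t := ⟨le_trans hs hz1.1, hz1.2⟩
        rw [Set.indicator_of_mem hzt, Set.indicator_of_mem hz1,
          Set.indicator_of_notMem hz0]
        simp only [Pi.one_apply, mul_one, mul_zero]
        have hx : (t - z) * (q - a) ≤ E := hprod _ (by linarith [hz1.2])
          (by linarith [le_trans hs hz1.1])
        have hex : Real.exp ((t - z) * (q - a)) ≤ Real.exp E := Real.exp_le_exp.mpr hx
        rw [hE2]
        nlinarith [mul_le_mul hex hex (Real.exp_pos _).le (Real.exp_pos E).le,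
          sq_nonneg (g q), Real.exp_pos ((t - z) * (q - a))]
      · have hzt : z ∉ Set.Ico (0:ℝ) t := by
          intro h'
          rcases lt_or_ge z s with h'' | h''
          · exact hz0 ⟨h'.1, h''⟩
          · exact hz1 ⟨h'', h'.2⟩
        rw [Set.indicator_of_notMem hzt, Set.indicator_of_notMem hz0,
          Set.indicator_of_notMem hz1]
        simp
  -- integrability of the bounding function in z
  have hind1_int : Integrable ((Set.Ico s t).indicator (1 : ℝ → ℝ))
      (volume.restrict (Set.Ici 0)) := by
    rw [integrable_indicator_iff measurableSet_Ico]
    refine (integrableOn_const_iff).mpr (Or.inr ?_)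
    exact lt_of_le_of_lt (Measure.restrict_apply_le _ _)
      (by rw [Real.volume_Ico]; exact ENNReal.ofReal_lt_top)
  have hind0_int : Integrable ((Set.Ico (0:ℝ) s).indicator (1 : ℝ → ℝ))
      (volume.restrict (Set.Ici 0)) := by
    rw [integrable_indicator_iff measurableSet_Ico]
    refine (integrableOn_const_iff).mpr (Or.inr ?_)
    exact lt_of_le_of_lt (Measure.restrict_apply_le _ _)
      (by rw [Real.volume_Ico]; exact ENNReal.ofReal_lt_top)
  have hi1 : (∫ z in Set.Ici (0:ℝ), (Set.Ico s t).indicator (1 : ℝ → ℝ) z) = t - s := by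
    rw [MeasureTheory.setIntegral_indicator measurableSet_Ico]
    have hsub : Set.Ici (0:ℝ) ∩ Set.Ico s t = Set.Ico s t :=
      Set.inter_eq_self_of_subset_right (fun x hx => le_trans hs hx.1)
    rw [hsub]
    simp only [Pi.one_apply]
    rw [MeasureTheory.setIntegral_const, measureReal_def, Real.volume_Ico, smul_eq_mul, mul_one,
      ENNReal.toReal_ofReal (by linarith)]
  have hi0 : (∫ z in Set.Ici (0:ℝ), (Set.Ico (0:ℝ) s).indicator (1 : ℝ → ℝ) z) = s := by
    rw [MeasureTheory.setIntegral_indicator measurableSet_Ico]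
    have hsub : Set.Ici (0:ℝ) ∩ Set.Ico (0:ℝ) s = Set.Ico (0:ℝ) s :=
      Set.inter_eq_self_of_subset_right (fun x hx => hx.1)
    rw [hsub]
    simp only [Pi.one_apply]
    rw [MeasureTheory.setIntegral_const, measureReal_def, Real.volume_Ico, smul_eq_mul, mul_one, sub_zero,
      ENNReal.toReal_ofReal hs]
  -- inner integral bound
  have hinner : ∀ q ∈ Set.Ici (0:ℝ),
      (∫ z in Set.Ici (0:ℝ), (h q z t - h q z s) ^ 2) ≤
        (Real.exp (2 * T * (T₀ + a)) * (1 + (T₀ + a) ^ 2 * T ^ 2) * (t - s)) * g q ^ 2 := by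
    intro q hq
    have hGint : Integrable (fun z => Real.exp (2 * T * (T₀ + a)) * g q ^ 2 *
        (Set.indicator (Set.Ico s t) 1 z
          + (t - s) ^ 2 * (T₀ + a) ^ 2 * Set.indicator (Set.Ico 0 s) 1 z))
        (volume.restrict (Set.Ici 0)) :=
      ((hind1_int.add (hind0_int.const_mul _)).const_mul _)
    have h1 : (∫ z in Set.Ici (0:ℝ), (h q z t - h q z s) ^ 2) ≤
        ∫ z in Set.Ici (0:ℝ), Real.exp (2 * T * (T₀ + a)) * g q ^ 2 *
          (Set.indicator (Set.Ico s t) 1 z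
            + (t - s) ^ 2 * (T₀ + a) ^ 2 * Set.indicator (Set.Ico 0 s) 1 z) :=
      integral_mono_of_nonneg (ae_of_all _ fun z => sq_nonneg _) hGint
        (ae_of_all _ (key q hq))
    have h2 : (∫ z in Set.Ici (0:ℝ), Real.exp (2 * T * (T₀ + a)) * g q ^ 2 *
        (Set.indicator (Set.Ico s t) 1 z
          + (t - s) ^ 2 * (T₀ + a) ^ 2 * Set.indicator (Set.Ico 0 s) 1 z)) =
        Real.exp (2 * T * (T₀ + a)) * g q ^ 2 *
          ((t - s) + (t - s) ^ 2 * (T₀ + a) ^ 2 * s) := by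
      rw [MeasureTheory.integral_const_mul,
        MeasureTheory.integral_add hind1_int (hind0_int.const_mul _),
        MeasureTheory.integral_const_mul, hi1, hi0]
    rw [h2] at h1
    refine h1.trans ?_
    have e1 : (t - s) * s ≤ T * T := by nlinarith
    have e2 : (T₀ + a) ^ 2 * ((t - s) * s) ≤ (T₀ + a) ^ 2 * (T * T) :=
      mul_le_mul_of_nonneg_left e1 (sq_nonneg _)
    have e3 : (t - s) + (t - s) ^ 2 * (T₀ + a) ^ 2 * s ≤
        (1 + (T₀ + a) ^ 2 * T ^ 2) * (t - s) := by
      nlinarith [mul_le_mul_of_nonneg_left e2 (show (0:ℝ) ≤ t - s by linarith)]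
    calc Real.exp (2 * T * (T₀ + a)) * g q ^ 2 * ((t - s) + (t - s) ^ 2 * (T₀ + a) ^ 2 * s)
        ≤ Real.exp (2 * T * (T₀ + a)) * g q ^ 2 * ((1 + (T₀ + a) ^ 2 * T ^ 2) * (t - s)) :=
          mul_le_mul_of_nonneg_left e3
            (mul_nonneg (Real.exp_pos _).le (sq_nonneg _))
      _ = (Real.exp (2 * T * (T₀ + a)) * (1 + (T₀ + a) ^ 2 * T ^ 2) * (t - s)) * g q ^ 2 := by
          ring
  -- outer integral
  have hBint : Integrable (fun q =>
      (Real.exp (2 * T * (T₀ + a)) * (1 + (T₀ + a) ^ 2 * T ^ 2) * (t - s)) * g q ^ 2)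
      (volume.restrict (Set.Ici 0)) := hgi.const_mul _
  have houter : (∫ q in Set.Ici (0:ℝ), ∫ z in Set.Ici (0:ℝ), (h q z t - h q z s) ^ 2) ≤
      ∫ q in Set.Ici (0:ℝ),
        (Real.exp (2 * T * (T₀ + a)) * (1 + (T₀ + a) ^ 2 * T ^ 2) * (t - s)) * g q ^ 2 :=
    integral_mono_of_nonneg
      (ae_of_all _ fun q => integral_nonneg fun z => sq_nonneg _) hBint
      ((ae_restrict_iff' measurableSet_Ici).mpr (ae_of_all _ hinner))
  rw [MeasureTheory.integral_const_mul] at houter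
  have hgnn : (0:ℝ) ≤ ∫ q in Set.Ici (0:ℝ), g q ^ 2 :=
    integral_nonneg fun q => sq_nonneg _
  refine houter.trans ?_
  have hX : (0:ℝ) ≤ Real.exp (2 * T * (T₀ + a)) * (1 + (T₀ + a) ^ 2 * T ^ 2) * (t - s) *
      ∫ q in Set.Ici (0:ℝ), g q ^ 2 := by
    apply mul_nonneg _ hgnn
    apply mul_nonneg (mul_nonneg (Real.exp_pos _).le (by nlinarith)) (by linarith)
  nlinarith [hX]
end
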